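/- (Privacy of Algorithm 1, PrDP Count.) Let X be a countable type, ε̌, ε̂ > 0 with ε̌ ≤ ε̂, let E : X → [ε̌, ε̂] be a privacy budget function, let L = ⌈log₂(ε̂/ε̌)⌉ (with L ≥ 1), and for a finite multiset D over X let c_i(D) be the number of records r of D (with multiplicity) with E(r) ∈ (2^{i−1}·ε̌, 2^i·ε̌] for i ≥ 2 and E(r) ∈ [ε̌, 2·ε̌] for i = 1. Define the mechanism P sending D to the product measure Lap(c₁(D), 1/(2^0·ε̌)) ⊗ ⋯ ⊗ Lap(c_L(D), 1/(2^{L−1}·ε̌)) on ℝ^L. Then P satisfies E-PrDP: for every finite multiset D, every r ∈ X, and every Borel set S ⊆ ℝ^L, P(D + {r})(S) ≤ exp(E(r))·P(D)(S) and P(D)(S) ≤ exp(E(r))·P(D + {r})(S). -/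

import Mathlib

/-!
Adding `r` to `D` changes the count vector only in the coordinate of the (at most one) domain
containing `E r`, and there by one. Moving the center of a Laplace density of scale `b` by `δ`
changes it by at most the factor `exp (δ / b)`, and a product measure of such perturbed factors is
bounded by the product of the factors. The domain `i` containing `E r` has scale
`1 / (2 ^ i * ε̌)` with `2 ^ i * ε̌ ≤ E r`, so the total factor is at most `exp (E r)`.
-/

open MeasureTheory

/-- `laplace a b` is the Laplace distribution on `ℝ` centered at `a` with scale `b`,
given by the density `x ↦ (1/(2b)) · exp(−|x−a|/b)` with respect to Lebesgue measure. -/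
noncomputable def laplace (a b : ℝ) : Measure ℝ :=
  volume.withDensity fun x => ENNReal.ofReal ((1 / (2 * b)) * Real.exp (-|x - a| / b))

open scoped NNReal

namespace MeasureTheory.Measure

variable {ι : Type*} [Fintype ι] {α : ι → Type*} [∀ i, MeasurableSpace (α i)]

theorem pi_mono {μ ν : ∀ i, Measure (α i)} (h : ∀ i, μ i ≤ ν i) :
    Measure.pi μ ≤ Measure.pi ν := by
  have hout : (OuterMeasure.pi fun i => (μ i).toOuterMeasure) ≤
      OuterMeasure.pi fun i => (ν i).toOuterMeasure :=
    OuterMeasure.le_pi.2 fun s _ => (OuterMeasure.pi_pi_le _ s).trans <|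
      Finset.prod_le_prod' fun i _ => Measure.le_iff'.1 (h i) _
  refine Measure.le_iff.2 fun s hs => ?_
  rw [Measure.pi_def, Measure.pi_def, toMeasure_apply _ _ hs, toMeasure_apply _ _ hs]
  exact hout _

theorem pi_nnreal_smul (μ : ∀ i, Measure (α i)) [∀ i, SigmaFinite (μ i)] (k : ι → ℝ≥0) :
    Measure.pi (fun i => k i • μ i) = (∏ i, k i) • Measure.pi μ :=
  pi_eq fun s _ => by
    simp only [smul_apply, pi_pi, Finset.prod_mul_distrib, ENNReal.smul_def, smul_eq_mul,
      ENNReal.ofNNReal_finsetProd]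

theorem pi_le_smul_pi {μ ν : ∀ i, Measure (α i)} [∀ i, SigmaFinite (ν i)] {k : ι → ℝ≥0}
    (h : ∀ i, μ i ≤ k i • ν i) : Measure.pi μ ≤ (∏ i, k i) • Measure.pi ν :=
  pi_nnreal_smul ν k ▸ pi_mono h

end MeasureTheory.Measure

instance sigmaFinite_laplace (a b : ℝ) : SigmaFinite (laplace a b) :=
  SigmaFinite.withDensity_of_ne_top' fun _ => ENNReal.ofReal_ne_top

theorem exp_neg_abs_sub_div_le {b : ℝ} (hb : 0 < b) (a a' x : ℝ) :
    Real.exp (-|x - a'| / b) ≤ Real.exp (|a' - a| / b) * Real.exp (-|x - a| / b) := by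
  rw [← Real.exp_add, Real.exp_le_exp, ← add_div]
  exact div_le_div_of_nonneg_right (by linarith [abs_sub_le x a' a]) hb.le

theorem laplace_le_smul_laplace {b : ℝ} (hb : 0 < b) (a a' : ℝ) :
    laplace a' b ≤ (Real.exp (|a' - a| / b)).toNNReal • laplace a b := by
  rw [laplace, laplace, ENNReal.smul_def, ← withDensity_smul _ (by fun_prop)]
  refine withDensity_mono (Filter.Eventually.of_forall fun x => ?_)
  simp only [Pi.smul_apply, smul_eq_mul]
  rw [← ENNReal.ofReal.eq_def, ← ENNReal.ofReal_mul (Real.exp_pos _).le, mul_left_comm]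
  gcongr
  exact exp_neg_abs_sub_div_le hb a a' x

theorem pi_laplace_apply_le {ι : Type*} [Fintype ι] {b : ι → ℝ} (hb : ∀ i, 0 < b i)
    {a a' : ι → ℝ} {t : ℝ} (ht : ∑ i, |a' i - a i| / b i ≤ t) (S : Set (ι → ℝ)) :
    Measure.pi (fun i => laplace (a' i) (b i)) S ≤
      ENNReal.ofReal (Real.exp t) * Measure.pi (fun i => laplace (a i) (b i)) S := by
  have h := Measure.pi_le_smul_pi fun i => laplace_le_smul_laplace (hb i) (a i) (a' i)
  rw [← Real.toNNReal_prod_of_nonneg fun i _ => (Real.exp_pos _).le, ← Real.exp_sum] at h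
  calc _ ≤ _ := Measure.le_iff'.1 h S
    _ ≤ _ := by
      rw [Measure.smul_apply, ENNReal.smul_def, smul_eq_mul]
      gcongr
      exact ENNReal.ofReal_le_ofReal (Real.exp_le_exp.2 ht)

theorem Finset.sum_ite_le {ι : Type*} (s : Finset ι) {p : ι → Prop} [DecidablePred p]
    (hp : {i | p i}.Subsingleton) {f : ι → ℝ} {t : ℝ} (hf : ∀ i, p i → f i ≤ t) (ht : 0 ≤ t) :
    ∑ i ∈ s, (if p i then f i else 0) ≤ t := by
  rw [← Finset.sum_filter]
  obtain h | ⟨i, hi⟩ := (s.filter p).eq_empty_or_nonempty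
  · simpa [h]
  · rw [Finset.mem_filter] at hi
    have : s.filter p = {i} := Finset.eq_singleton_iff_unique_mem.2
      ⟨Finset.mem_filter.2 hi, fun j hj => hp (Finset.mem_filter.1 hj).2 hi.2⟩
    rw [this, Finset.sum_singleton]
    exact hf i hi.2

/-- The paper's `(n + 1)`-st domain: indices are 0-based, as in `c D i`. -/
def InBudgetDomain (ε : ℝ) (n : ℕ) (x : ℝ) : Prop :=
  if n = 0 then x ∈ Set.Icc ε (2 * ε) else x ∈ Set.Ioc (2 ^ n * ε) (2 ^ (n + 1) * ε)

namespace InBudgetDomain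

variable {ε x : ℝ} {m n : ℕ}

theorem pow_mul_le (h : InBudgetDomain ε n x) : 2 ^ n * ε ≤ x := by
  unfold InBudgetDomain at h
  split_ifs at h with hn
  · simpa [hn] using h.1
  · exact h.1.le

theorem le_pow_succ_mul (h : InBudgetDomain ε n x) : x ≤ 2 ^ (n + 1) * ε := by
  unfold InBudgetDomain at h
  split_ifs at h with hn
  · simpa [hn] using h.2
  · exact h.2

theorem unique (hε : 0 ≤ ε) (hm : InBudgetDomain ε m x) (hn : InBudgetDomain ε n x) : m = n := by
  by_contra hne
  wlog hlt : m < n generalizing m n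
  · exact this hn hm (Ne.symm hne) (by omega)
  have hle : 2 ^ (m + 1) * ε ≤ 2 ^ n * ε := by gcongr <;> [norm_num; omega]
  have hlow : 2 ^ n * ε < x := by
    unfold InBudgetDomain at hn
    rw [if_neg (by omega)] at hn
    exact hn.1
  linarith [hm.le_pow_succ_mul]

end InBudgetDomain

theorem prdp_count_privacy_general {X : Type*}
    (εcheck εhat : ℝ) (hεcheck : 0 < εcheck)
    (E : X → ℝ) (hE : ∀ r, E r ∈ Set.Icc εcheck εhat)
    (L : ℕ)
    (c : Multiset X → Fin L → ℕ)
    (hc : ∀ (D : Multiset X) (i : Fin L), c D i =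
      Multiset.card (@Multiset.filter X
        (fun r => if (i : ℕ) = 0 then E r ∈ Set.Icc εcheck (2 * εcheck)
          else E r ∈ Set.Ioc (2 ^ (i : ℕ) * εcheck) (2 ^ ((i : ℕ) + 1) * εcheck))
        (Classical.decPred _) D))
    (P : Multiset X → Measure (Fin L → ℝ))
    (hP : ∀ D, P D = Measure.pi fun i : Fin L =>
      laplace (c D i) (1 / (2 ^ (i : ℕ) * εcheck)))
    (D : Multiset X) (r : X) (S : Set (Fin L → ℝ)) :
    P (r ::ₘ D) S ≤ ENNReal.ofReal (Real.exp (E r)) * P D S ∧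
    P D S ≤ ENNReal.ofReal (Real.exp (E r)) * P (r ::ₘ D) S := by
  classical
  have hterm : ∀ i : Fin L, |(c (r ::ₘ D) i : ℝ) - c D i| / (1 / (2 ^ (i : ℕ) * εcheck)) =
      if InBudgetDomain εcheck i (E r) then 2 ^ (i : ℕ) * εcheck else 0 := by
    intro i
    rw [hc, hc, ← Multiset.countP_eq_card_filter, ← Multiset.countP_eq_card_filter,
      Multiset.countP_cons]
    unfold InBudgetDomain
    split_ifs <;> simp
  have hsens : ∑ i : Fin L, |(c (r ::ₘ D) i : ℝ) - c D i| / (1 / (2 ^ (i : ℕ) * εcheck)) ≤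
      E r := by
    rw [Finset.sum_congr rfl fun i _ => hterm i]
    exact Finset.univ.sum_ite_le (fun i hi j hj => Fin.ext (hi.unique hεcheck.le hj))
      (fun i hi => hi.pow_mul_le) (hεcheck.le.trans (hE r).1)
  have hb : ∀ i : Fin L, 0 < 1 / (2 ^ (i : ℕ) * εcheck) := fun i => by positivity
  rw [hP, hP]
  exact ⟨pi_laplace_apply_le hb hsens S,
    pi_laplace_apply_le hb (by simpa only [abs_sub_comm] using hsens) S⟩

/-- Privacy of Algorithm 1 (PrDP Count). Domains are indexed by `i : Fin L` (0-based, so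
index `i` corresponds to the paper's domain `i+1`): `c D i` counts the records `r` of `D`
(with multiplicity) with `E r ∈ (2^i·ε̌, 2^(i+1)·ε̌]` (and `E r ∈ [ε̌, 2·ε̌]` for `i = 0`).
The mechanism `P` sends `D` to the product measure
`Lap(c D 0, 1/(2^0·ε̌)) ⊗ ⋯ ⊗ Lap(c D (L-1), 1/(2^(L-1)·ε̌))` on `ℝ^L`. Then `P` satisfies
`E`-PrDP: for every dataset `D`, record `r`, and Borel `S ⊆ ℝ^L`,
`P(D + {r})(S) ≤ exp(E r)·P(D)(S)` and `P(D)(S) ≤ exp(E r)·P(D + {r})(S)`. -/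
theorem prdp_count_privacy {X : Type*} [Countable X]
    (εcheck εhat : ℝ) (hεcheck : 0 < εcheck) (hεhat : εcheck ≤ εhat)
    (E : X → ℝ) (hE : ∀ r, E r ∈ Set.Icc εcheck εhat)
    (L : ℕ) (hL : 1 ≤ L) (hLdef : (L : ℤ) = ⌈Real.logb 2 (εhat / εcheck)⌉)
    (c : Multiset X → Fin L → ℕ)
    (hc : ∀ (D : Multiset X) (i : Fin L), c D i =
      Multiset.card (@Multiset.filter X
        (fun r => if (i : ℕ) = 0 then E r ∈ Set.Icc εcheck (2 * εcheck)
          else E r ∈ Set.Ioc (2 ^ (i : ℕ) * εcheck) (2 ^ ((i : ℕ) + 1) * εcheck))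
        (Classical.decPred _) D))
    (P : Multiset X → Measure (Fin L → ℝ))
    (hP : ∀ D, P D = Measure.pi fun i : Fin L =>
      laplace (c D i) (1 / (2 ^ (i : ℕ) * εcheck)))
    (D : Multiset X) (r : X) (S : Set (Fin L → ℝ)) (hS : MeasurableSet S) :
    P (r ::ₘ D) S ≤ ENNReal.ofReal (Real.exp (E r)) * P D S ∧
    P D S ≤ ENNReal.ofReal (Real.exp (E r)) * P (r ::ₘ D) S :=
  prdp_count_privacy_general εcheck εhat hεcheck E hE L c hc P hP D r S
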